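/- arXiv:1407.4097 — 6 statements merged into one kernel-verified Lean document; each statement's English description precedes it below -/
import Mathlib

section
/- Let (μ_n) and μ be probability measures on ℝ with μ ≠ δ_0, suppose μ_n → μ weakly and let (c_n) be real numbers with c_n → ∞. Then for every m > 0, liminf_{n→∞} (T_{c_n} μ_n)({x : |x| > m}) ≥ 1 − μ({0}). In particular, since μ({0}) < 1, no subsequence of (T_{c_n} μ_n) converges weakly to a probability measure on ℝ. -/
open MeasureTheory Filter Topology ENNReal BoundedContinuousFunction

noncomputable section

/-- `T_c μ`: pushforward of `μ` under `x ↦ c * x`. -/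
def rescale (c : ℝ) (μ : Measure ℝ) : Measure ℝ := μ.map (fun x => c * x)

/-- Weak convergence of a sequence of measures on `ℝ`:
convergence of integrals of all bounded continuous functions. -/
def WeakTendsto (μs : ℕ → Measure ℝ) (μ : Measure ℝ) : Prop :=
  ∀ f : ℝ →ᵇ ℝ, Tendsto (fun n => ∫ x, f x ∂(μs n)) atTop (𝓝 (∫ x, f x ∂μ))

def toProb (μ : Measure ℝ) (h : IsProbabilityMeasure μ) : ProbabilityMeasure ℝ := ⟨μ, h⟩

lemma weakTendsto_prob {μs : ℕ → Measure ℝ} {μ : Measure ℝ}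
    (hμs : ∀ n, IsProbabilityMeasure (μs n)) (hμ : IsProbabilityMeasure μ)
    (hconv : WeakTendsto μs μ) :
    Tendsto (fun n => toProb (μs n) (hμs n)) atTop (𝓝 (toProb μ hμ)) :=
  (ProbabilityMeasure.tendsto_iff_forall_integral_tendsto
    (μs := fun n => toProb (μs n) (hμs n)) (μ := toProb μ hμ)).mpr hconv

lemma part1 (μs : ℕ → Measure ℝ) (μ : Measure ℝ)
    (hμs : ∀ n, IsProbabilityMeasure (μs n)) (hμ : IsProbabilityMeasure μ)
    (hconv : WeakTendsto μs μ)
    (c : ℕ → ℝ) (hc : Tendsto c atTop atTop) (m : ℝ) (hm : 0 < m) :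
    (1 : ℝ≥0∞) - μ {0} ≤ atTop.liminf (fun n => rescale (c n) (μs n) {x : ℝ | m < |x|}) := by
  have hT := weakTendsto_prob hμs hμ hconv
  have hSmeas : MeasurableSet {x : ℝ | m < |x|} :=
    (isOpen_lt continuous_const continuous_abs).measurableSet
  -- Step A: for each δ > 0
  have stepA : ∀ δ : ℝ, 0 < δ →
      μ {x : ℝ | δ < |x|} ≤ atTop.liminf (fun n => rescale (c n) (μs n) {x : ℝ | m < |x|}) := by
    intro δ hδ
    have hopen : IsOpen {x : ℝ | δ < |x|} := isOpen_lt continuous_const continuous_abs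
    have h1 : μ {x : ℝ | δ < |x|} ≤ atTop.liminf (fun n => μs n {x : ℝ | δ < |x|}) :=
      ProbabilityMeasure.le_liminf_measure_open_of_tendsto
        (μ := toProb μ hμ) (μs := fun n => toProb (μs n) (hμs n)) hT hopen
    refine h1.trans (liminf_le_liminf ?_)
    filter_upwards [hc.eventually_gt_atTop (m / δ)] with n hn
    have hcn : 0 < c n := lt_trans (div_pos hm hδ) hn
    have : rescale (c n) (μs n) {x : ℝ | m < |x|}
        = μs n ((fun x => c n * x) ⁻¹' {x : ℝ | m < |x|}) :=
      Measure.map_apply (measurable_const_mul _) hSmeas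
    rw [this]
    refine measure_mono ?_
    intro x hx
    simp only [Set.mem_setOf_eq, Set.mem_preimage] at hx ⊢
    rw [abs_mul, abs_of_pos hcn]
    rw [div_lt_iff₀ hδ] at hn
    have h2 : c n * δ < c n * |x| := mul_lt_mul_of_pos_left hx hcn
    linarith
  -- Step B
  set s : ℕ → Set ℝ := fun k => {x : ℝ | 1 / (k + 1 : ℝ) < |x|} with hs
  have hmono : Monotone s := by
    intro k l hkl x hx
    simp only [hs, Set.mem_setOf_eq] at hx ⊢
    refine lt_of_le_of_lt ?_ hx
    apply one_div_le_one_div_of_le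
    · positivity
    · have : (k : ℝ) ≤ (l : ℝ) := Nat.cast_le.mpr hkl
      linarith
  have hUnion : ⋃ k, s k = ({0} : Set ℝ)ᶜ := by
    ext x
    simp only [hs, Set.mem_iUnion, Set.mem_setOf_eq, Set.mem_compl_iff, Set.mem_singleton_iff]
    constructor
    · rintro ⟨k, hk⟩ rfl
      simp only [abs_zero] at hk
      have : (0:ℝ) < 1 / (k + 1 : ℝ) := by positivity
      linarith
    · intro hx
      obtain ⟨k, hk⟩ := exists_nat_one_div_lt (abs_pos.mpr hx)
      exact ⟨k, hk⟩
  have htend : Tendsto (μ ∘ s) atTop (𝓝 (μ (⋃ k, s k))) := tendsto_measure_iUnion_atTop hmono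
  have hcompl : μ (⋃ k, s k) = 1 - μ {0} := by
    rw [hUnion, measure_compl (measurableSet_singleton 0) (measure_ne_top μ _), measure_univ]
  rw [← hcompl]
  exact le_of_tendsto' htend fun k => stepA _ (by positivity)
lemma prob_singleton_eq_one_imp_dirac {μ : Measure ℝ} (hμ : IsProbabilityMeasure μ)
    (h : μ {0} = 1) : μ = Measure.dirac 0 := by
  have hcompl : μ ({0} : Set ℝ)ᶜ = 0 := by
    rw [measure_compl (measurableSet_singleton 0) (measure_ne_top μ _), measure_univ, h,
      tsub_self]
  ext s hs
  rw [Measure.dirac_apply' 0 hs]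
  have key : μ s = μ (s ∩ {0}) := by
    have := measure_inter_add_diff s (measurableSet_singleton (0:ℝ)) (μ := μ)
    have hdiff : μ (s \ {0}) = 0 :=
      measure_mono_null (Set.diff_subset_compl s {0}) hcompl
    rw [hdiff, add_zero] at this
    exact this.symm
  by_cases h0 : (0:ℝ) ∈ s
  · have : s ∩ {0} = {0} := by
      ext y; simp only [Set.mem_inter_iff, Set.mem_singleton_iff]
      exact ⟨fun h' => h'.2, fun h' => ⟨h' ▸ h0, h'⟩⟩
    rw [key, this, h, Set.indicator_of_mem h0]; rfl
  · have : s ∩ {0} = ∅ := by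
      ext y; simp only [Set.mem_inter_iff, Set.mem_singleton_iff, Set.mem_empty_iff_false,
        iff_false, not_and]
      rintro hy rfl; exact h0 hy
    rw [key, this, measure_empty, Set.indicator_of_notMem h0]

theorem stmt0 (μs : ℕ → Measure ℝ) (μ : Measure ℝ)
    (hμs : ∀ n, IsProbabilityMeasure (μs n)) (hμ : IsProbabilityMeasure μ)
    (hne : μ ≠ Measure.dirac 0)
    (hconv : WeakTendsto μs μ)
    (c : ℕ → ℝ) (hc : Tendsto c atTop atTop) :
    (∀ m : ℝ, 0 < m →
      (1 : ℝ≥0∞) - μ {0} ≤ atTop.liminf (fun n => rescale (c n) (μs n) {x : ℝ | m < |x|}))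
    ∧ ∀ φ : ℕ → ℕ, StrictMono φ → ∀ ν : Measure ℝ, IsProbabilityMeasure ν →
        ¬ WeakTendsto (fun k => rescale (c (φ k)) (μs (φ k))) ν := by
  constructor
  · intro m hm
    exact part1 μs μ hμs hμ hconv c hc m hm
  · intro φ hφ ν hν h
    -- μ {0} < 1
    have hμ0 : μ {0} < 1 := by
      rcases lt_or_eq_of_le (prob_le_one (μ := μ) (s := {0})) with h' | h'
      · exact h'
      · exact absurd (prob_singleton_eq_one_imp_dirac hμ h') hne
    have hpos : (0 : ℝ≥0∞) < 1 - μ {0} := tsub_pos_of_lt hμ0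
    -- choose m with ν {x | m ≤ |x|} < 1 - μ {0}
    set C : ℕ → Set ℝ := fun k => {x : ℝ | (k : ℝ) ≤ |x|} with hC
    have hCmeas : ∀ k, MeasurableSet (C k) := fun k =>
      (isClosed_le continuous_const continuous_abs).measurableSet
    have hCanti : Antitone C := by
      intro k l hkl x hx
      simp only [hC, Set.mem_setOf_eq] at hx ⊢
      exact le_trans (Nat.cast_le.mpr hkl) hx
    have hCempty : ⋂ k, C k = ∅ := by
      ext x
      simp only [hC, Set.mem_iInter, Set.mem_setOf_eq, Set.mem_empty_iff_false, iff_false,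
        not_forall, not_le]
      obtain ⟨k, hk⟩ := exists_nat_gt |x|
      exact ⟨k, hk⟩
    have htend : Tendsto (ν ∘ C) atTop (𝓝 0) := by
      have := tendsto_measure_iInter_atTop (μ := ν)
        (fun k => (hCmeas k).nullMeasurableSet) hCanti ⟨0, measure_ne_top ν _⟩
      rwa [hCempty, measure_empty] at this
    obtain ⟨k, hk1, hk2⟩ :=
      ((htend.eventually_lt_const hpos).and (eventually_ge_atTop 1)).exists
    set m : ℝ := (k : ℝ) with hmdef
    have hm : 0 < m := by
      rw [hmdef]; exact_mod_cast Nat.lt_of_lt_of_le Nat.zero_lt_one hk2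
    -- apply part1 to the subsequence
    have hconv' : WeakTendsto (fun j => μs (φ j)) μ :=
      fun f => (hconv f).comp hφ.tendsto_atTop
    have hc' : Tendsto (fun j => c (φ j)) atTop atTop := hc.comp hφ.tendsto_atTop
    have h1 : (1 : ℝ≥0∞) - μ {0}
        ≤ atTop.liminf (fun j => rescale (c (φ j)) (μs (φ j)) {x : ℝ | m < |x|}) :=
      part1 _ μ (fun j => hμs (φ j)) hμ hconv' _ hc' m hm
    -- portmanteau upper bound on closed set C k
    have hQprob : ∀ j, IsProbabilityMeasure (rescale (c (φ j)) (μs (φ j))) := fun j =>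
      have := hμs (φ j)
      Measure.isProbabilityMeasure_map (measurable_const_mul _).aemeasurable
    have hT := weakTendsto_prob hQprob hν h
    have hclosed : IsClosed (C k) := isClosed_le continuous_const continuous_abs
    have h2 : atTop.limsup (fun j => rescale (c (φ j)) (μs (φ j)) (C k)) ≤ ν (C k) :=
      ProbabilityMeasure.limsup_measure_closed_le_of_tendsto
        (μ := toProb ν hν)
        (μs := fun j => toProb (rescale (c (φ j)) (μs (φ j))) (hQprob j))
        hT hclosed
    have h3 : atTop.liminf (fun j => rescale (c (φ j)) (μs (φ j)) {x : ℝ | m < |x|})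
        ≤ atTop.liminf (fun j => rescale (c (φ j)) (μs (φ j)) (C k)) := by
      refine liminf_le_liminf (Eventually.of_forall fun j => measure_mono ?_)
      intro x hx
      show (k : ℝ) ≤ |x|
      exact le_of_lt hx
    have h35 : atTop.liminf (fun j => rescale (c (φ j)) (μs (φ j)) (C k))
        ≤ atTop.limsup (fun j => rescale (c (φ j)) (μs (φ j)) (C k)) := liminf_le_limsup
    exact absurd (h1.trans (h3.trans (h35.trans h2))) (not_le.mpr hk1)
end
end

section
/- Let (μ_n) and μ be probability measures on ℝ with μ ≠ δ_0, let a_n, b_n be positive reals with T_{a_n} μ_n → μ weakly, and suppose that every subsequence of (T_{b_n} μ_n) has a further subsequence converging weakly to a probability measure on ℝ. Then the sequence (b_n/a_n) is bounded; moreover, whenever a subsequence T_{b_{n_k}} μ_{n_k} converges weakly to a probability measure ν, there is a further subsequence along which b_{n_k}/a_{n_k} converges to some c ∈ ℝ and ν = T_c μ. -/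
open MeasureTheory Filter Topology ENNReal BoundedContinuousFunction

noncomputable section

/-- Scale mixture `μ ∘ ν`: pushforward of `μ × ν` under `(x, s) ↦ x * s`. -/
def mix (μ ν : Measure ℝ) : Measure ℝ := (μ.prod ν).map (fun p => p.1 * p.2)

/-- Convolution of two measures on `ℝ`. -/
def mconv (μ ν : Measure ℝ) : Measure ℝ := (μ.prod ν).map (fun p => p.1 + p.2)

/-- `n`-fold convolution power, with the convention that the 0th power is `δ_0`. -/
def convPow (μ : Measure ℝ) : ℕ → Measure ℝ
  | 0 => Measure.dirac 0
  | n + 1 => mconv (convPow μ n) μ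

/-- A probability measure `μ` on `ℝ` is weakly stable if for all `a b : ℝ` there is a
probability measure `lam` with `(T_a μ) ∗ (T_b μ) = μ ∘ lam`. -/
def WeaklyStable (μ : Measure ℝ) : Prop :=
  ∀ a b : ℝ, ∃ lam : Measure ℝ, IsProbabilityMeasure lam ∧
    mconv (rescale a μ) (rescale b μ) = mix μ lam

/-- `μ` is nontrivial: it has no atoms. -/
def NontrivialMeasure (μ : Measure ℝ) : Prop := ∀ x : ℝ, μ {x} = 0

/-- `μ` is symmetric: `T_{-1} μ = μ`. -/
def SymmetricMeasure (μ : Measure ℝ) : Prop := rescale (-1) μ = μ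

/-- `lam` is `μ`-weakly infinitely divisible: for every `n ≥ 1` there is a probability
measure `ν` concentrated on `[0, ∞)` with `(μ ∘ ν)^{∗ n} = μ ∘ lam`. -/
def MuWeaklyInfDiv (μ lam : Measure ℝ) : Prop :=
  ∀ n : ℕ, 1 ≤ n → ∃ ν : Measure ℝ, IsProbabilityMeasure ν ∧ ν (Set.Iio 0) = 0 ∧
    convPow (mix μ ν) n = mix μ lam

/-- Characteristic function of a measure on `ℝ`. -/
def charFun' (μ : Measure ℝ) (t : ℝ) : ℂ := ∫ x, Complex.exp (t * x * Complex.I) ∂μ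

/-- A convolution semigroup family for `(μ, lam)`. -/
def ConvSemigroupFamily (μ lam : Measure ℝ) (L : ℝ → Measure ℝ) : Prop :=
  (∀ r : ℝ, 0 ≤ r → IsProbabilityMeasure (L r)) ∧
  L 0 = Measure.dirac 0 ∧ L 1 = lam ∧
  (∀ r s : ℝ, 0 ≤ r → 0 ≤ s → mconv (mix μ (L r)) (mix μ (L s)) = mix μ (L (r + s))) ∧
  (∀ f : ℝ →ᵇ ℝ, Tendsto (fun r => ∫ x, f x ∂(L r)) (𝓝[>] (0 : ℝ)) (𝓝 (f 0)))

/-- `C_#`: bounded continuous functions vanishing on a neighborhood of `0`. -/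
def CSharp (f : ℝ →ᵇ ℝ) : Prop := ∃ ε > (0 : ℝ), ∀ x : ℝ, |x| < ε → f x = 0

/-- `κ(μ) = sup {p ∈ [0,2] : ∫ |x|^p μ(dx) < ∞}` (with `sup ∅ = 0` in `ℝ`). -/
def kappa (μ : Measure ℝ) : ℝ :=
  sSup {p : ℝ | p ∈ Set.Icc (0 : ℝ) 2 ∧ ∫⁻ x, ENNReal.ofReal (|x| ^ p) ∂μ < ∞}

/-!
Rescaling `(c, ρ) ↦ T_c ρ` is jointly continuous for weak convergence, because `T_c ρ` is the
image of `ρ ⊗ δ_c` under `(x, s) ↦ s x`. With `c_n = b_n / a_n` we have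
`T_{b_n} μ_n = T_{c_n} (T_{a_n} μ_n)`, so wherever `c_n → c` along a subsequence the limit of
`T_{b_n} μ_n` there is `T_c μ`; this gives the second claim once `(c_n)` is bounded. If `(c_n)` were
unbounded, along a subsequence `c_n → ∞` and `T_{b_n} μ_n → ν`, hence
`T_{a_n} μ_n = T_{1/c_n} (T_{b_n} μ_n) → T_0 ν = δ_0`, forcing `μ = δ_0`.
-/

instance isProbabilityMeasure_rescale (c : ℝ) (μ : Measure ℝ) [IsProbabilityMeasure μ] :
    IsProbabilityMeasure (rescale c μ) :=
  Measure.isProbabilityMeasure_map (measurable_const_mul c).aemeasurable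

lemma rescale_rescale (c d : ℝ) (μ : Measure ℝ) :
    rescale c (rescale d μ) = rescale (c * d) μ := by
  simp only [rescale, Measure.map_map (measurable_const_mul c) (measurable_const_mul d)]
  congr 1
  ext x
  simp [mul_assoc]

lemma rescale_div_rescale (c : ℝ) {d : ℝ} (hd : d ≠ 0) (μ : Measure ℝ) :
    rescale (c / d) (rescale d μ) = rescale c μ := by
  rw [rescale_rescale, div_mul_cancel₀ _ hd]

lemma rescale_zero (μ : Measure ℝ) [IsProbabilityMeasure μ] : rescale 0 μ = Measure.dirac 0 := by
  simp [rescale, Measure.map_const]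

lemma exists_subseq_tendsto_atTop_of_not_bddAbove {u : ℕ → ℝ} (h : ¬ BddAbove (Set.range u)) :
    ∃ φ : ℕ → ℕ, StrictMono φ ∧ Tendsto (u ∘ φ) atTop atTop := by
  have hfreq : ∀ m : ℕ, ∃ᶠ n in atTop, (m : ℝ) < u n := by
    intro m
    by_contra hm
    exact h (IsBoundedUnder.bddAbove_range ⟨m, by simpa [not_frequently] using hm⟩)
  obtain ⟨φ, hφ, hlt⟩ := extraction_forall_of_frequently hfreq
  exact ⟨φ, hφ, tendsto_atTop_mono (fun n => (hlt n).le) tendsto_natCast_atTop_atTop⟩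

lemma rescale_eq_map_prod_dirac (c : ℝ) (μ : Measure ℝ) [SFinite μ] :
    rescale c μ = (μ.prod (Measure.dirac c)).map (fun p => p.2 * p.1) := by
  rw [Measure.prod_dirac, Measure.map_map (by fun_prop) measurable_prodMk_right]
  rfl

section WeakTendsto

variable {ms : ℕ → Measure ℝ} {m : Measure ℝ}

lemma WeakTendsto.comp (h : WeakTendsto ms m) {φ : ℕ → ℕ} (hφ : Tendsto φ atTop atTop) :
    WeakTendsto (fun k => ms (φ k)) m :=
  fun f => (h f).comp hφ

variable [hms : ∀ n, IsProbabilityMeasure (ms n)] [hm : IsProbabilityMeasure m]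

lemma weakTendsto_iff_tendsto :
    WeakTendsto ms m ↔
      @Tendsto _ (ProbabilityMeasure ℝ) (fun n => ⟨ms n, hms n⟩) atTop (𝓝 ⟨m, hm⟩) :=
  (ProbabilityMeasure.tendsto_iff_forall_integral_tendsto (μs := fun n => ⟨ms n, hms n⟩)
    (μ := ⟨m, hm⟩)).symm

lemma WeakTendsto.unique {m' : Measure ℝ} [hm' : IsProbabilityMeasure m']
    (h : WeakTendsto ms m) (h' : WeakTendsto ms m') : m = m' :=
  congrArg ProbabilityMeasure.toMeasure
    (tendsto_nhds_unique (weakTendsto_iff_tendsto.1 h) (weakTendsto_iff_tendsto.1 h'))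

lemma WeakTendsto.rescale_of_tendsto (h : WeakTendsto ms m) {c : ℕ → ℝ} {c₀ : ℝ}
    (hc : Tendsto c atTop (𝓝 c₀)) :
    WeakTendsto (fun n => rescale (c n) (ms n)) (rescale c₀ m) := by
  have hprod := (ProbabilityMeasure.continuous_prod.tendsto _).comp
    ((weakTendsto_iff_tendsto.1 h).prodMk_nhds ((continuous_diracProba.tendsto c₀).comp hc))
  have hmap := ProbabilityMeasure.tendsto_map_of_tendsto_of_continuous _ _ hprod
    (continuous_snd.mul continuous_fst)
  intro f
  convert ProbabilityMeasure.tendsto_iff_forall_integral_tendsto.1 hmap f using 2 <;>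
  simp [rescale_eq_map_prod_dirac, diracProba] <;> rfl

end WeakTendsto

lemma eq_rescale_of_weakTendsto {ρs σs : ℕ → Measure ℝ} [∀ n, IsProbabilityMeasure (ρs n)]
    {ρ σ : Measure ℝ} [IsProbabilityMeasure ρ] [IsProbabilityMeasure σ]
    (hρ : WeakTendsto ρs ρ) (hσ : WeakTendsto σs σ) {c : ℕ → ℝ} {c₀ : ℝ}
    (hc : Tendsto c atTop (𝓝 c₀)) (hσρ : ∀ n, σs n = rescale (c n) (ρs n)) :
    σ = rescale c₀ ρ := by
  obtain rfl : σs = fun n => rescale (c n) (ρs n) := funext hσρ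
  exact hσ.unique (hρ.rescale_of_tendsto hc)

theorem stmt1 (μs : ℕ → Measure ℝ) (μ : Measure ℝ)
    (hμs : ∀ n, IsProbabilityMeasure (μs n)) (hμ : IsProbabilityMeasure μ)
    (hne : μ ≠ Measure.dirac 0)
    (a b : ℕ → ℝ) (ha : ∀ n, 0 < a n) (hb : ∀ n, 0 < b n)
    (hconv : WeakTendsto (fun n => rescale (a n) (μs n)) μ)
    (hcpt : ∀ φ : ℕ → ℕ, StrictMono φ → ∃ ψ : ℕ → ℕ, StrictMono ψ ∧
      ∃ ν : Measure ℝ, IsProbabilityMeasure ν ∧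
        WeakTendsto (fun k => rescale (b (φ (ψ k))) (μs (φ (ψ k)))) ν) :
    (∃ C : ℝ, ∀ n, b n / a n ≤ C) ∧
    ∀ φ : ℕ → ℕ, StrictMono φ → ∀ ν : Measure ℝ, IsProbabilityMeasure ν →
      WeakTendsto (fun k => rescale (b (φ k)) (μs (φ k))) ν →
      ∃ ψ : ℕ → ℕ, StrictMono ψ ∧ ∃ c : ℝ,
        Tendsto (fun k => b (φ (ψ k)) / a (φ (ψ k))) atTop (𝓝 c) ∧ ν = rescale c μ := by
  have hbdd : ∃ C : ℝ, ∀ n, b n / a n ≤ C := by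
    by_contra hunbdd
    obtain ⟨φ, hφ, hφ_top⟩ := exists_subseq_tendsto_atTop_of_not_bddAbove
      (u := fun n => b n / a n) (by simpa [bddAbove_def] using hunbdd)
    obtain ⟨ψ, hψ, ν, hν, hlim⟩ := hcpt φ hφ
    have hinv : Tendsto (fun k => a (φ (ψ k)) / b (φ (ψ k))) atTop (𝓝 0) := by
      simpa only [Function.comp_def, Pi.inv_def, inv_div]
        using (hφ_top.comp hψ.tendsto_atTop).inv_tendsto_atTop
    have hμ_eq := eq_rescale_of_weakTendsto hlim (hconv.comp (hφ.comp hψ).tendsto_atTop) hinv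
      fun k => (rescale_div_rescale _ (hb _).ne' _).symm
    exact hne (by rwa [rescale_zero] at hμ_eq)
  refine ⟨hbdd, fun φ hφ ν hν hlim => ?_⟩
  obtain ⟨C, hC⟩ := hbdd
  obtain ⟨c₀, -, ψ, hψ, hc⟩ := tendsto_subseq_of_bounded (Metric.isBounded_Icc 0 C)
    fun k => ⟨(div_pos (hb (φ k)) (ha (φ k))).le, hC (φ k)⟩
  exact ⟨ψ, hψ, c₀, hc, eq_rescale_of_weakTendsto (hconv.comp (hφ.comp hψ).tendsto_atTop)
    (hlim.comp hψ.tendsto_atTop) hc fun k => (rescale_div_rescale _ (ha _).ne' _).symm⟩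
end
end

section
/- Let μ be a nontrivial weakly stable probability measure on ℝ, let p > 0, and suppose there exists a probability measure λ ≠ δ_0 on ℝ such that for all a, b > 0, (T_a(μ∘λ)) ∗ (T_b(μ∘λ)) = T_{(a^p+b^p)^{1/p}}(μ∘λ). Then p ≤ 2. -/
open MeasureTheory Filter Topology ENNReal BoundedContinuousFunction

noncomputable section

/-!
Let `ν = μ ∘ λ` and `c = 2 ^ (1 / p)`. The stability relation at `a = b = 1` says that the
characteristic function `φ` of `ν` satisfies `φ t ^ 2 = φ (c t)`, so `g = |φ| ^ 2`, the
characteristic function of the symmetrisation of `ν`, satisfies `g (c ^ n t) = g t ^ (2 ^ n)`.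
Choosing `g t₀ > 0`, this gives `1 - g (t₀ / c ^ n) ≤ -log (g t₀) / 2 ^ n`. If `p > 2` then
`c ^ 2 < 2`, so `(1 - g t) / t ^ 2 → 0` along `t = t₀ / c ^ n`; since
`2 (1 - cos (t x)) / t ^ 2 → x ^ 2`, Fatou's lemma shows that the symmetrisation has vanishing
second moment, i.e. `ν` is a point mass. But `μ` has no atoms, so every atom of `ν` has mass at
most `λ {0}`, which is `< 1` as `λ ≠ δ₀`.
-/

lemma two_mul_one_sub_cos_div_sq {u : ℝ} (hu : u ≠ 0) (x : ℝ) :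
    2 * ((1 - Real.cos (u * x)) / u ^ 2) = x ^ 2 * Real.sinc (u * x / 2) ^ 2 := by
  rcases eq_or_ne x 0 with rfl | hx
  · simp
  have hθ : u * x / 2 ≠ 0 := by positivity
  rw [Real.sinc_of_ne_zero hθ, show u * x = 2 * (u * x / 2) by ring, Real.cos_two_mul,
    Real.cos_sq']
  field_simp
  ring

lemma re_charFun_eq_integral_cos (ρ : Measure ℝ) [IsFiniteMeasure ρ] (t : ℝ) :
    (charFun ρ t).re = ∫ x, Real.cos (t * x) ∂ρ := by
  have hint : Integrable (fun x : ℝ => Complex.exp (t * x * Complex.I)) ρ :=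
    (integrable_const (1 : ℝ)).mono (by fun_prop) (by simp [Complex.norm_exp])
  rw [charFun_apply_real, ← RCLike.re_to_complex, ← integral_re hint]
  congr 1 with x
  rw [RCLike.re_to_complex, ← Complex.exp_ofReal_mul_I_re]
  push_cast
  rfl

lemma charFun_map_sub_prod (ν : Measure ℝ) [IsProbabilityMeasure ν] (t : ℝ) :
    charFun ((ν.prod ν).map (fun z => z.1 - z.2)) t = Complex.normSq (charFun ν t) := by
  rw [Complex.normSq_eq_conj_mul_self, ← charFun_neg, mul_comm, charFun_apply_real,
    integral_map (by fun_prop) (by fun_prop)]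
  simp only [charFun_apply_real, ← integral_prod_mul, ← Complex.exp_add]
  congr 1 with z
  push_cast
  ring_nf

lemma ae_eq_zero_of_tendsto_one_sub_re_charFun_div_sq {ρ : Measure ℝ} [IsProbabilityMeasure ρ]
    {u : ℕ → ℝ} (hu : Tendsto u atTop (𝓝 0)) (hu0 : ∀ n, u n ≠ 0)
    (h : Tendsto (fun n => (1 - (charFun ρ (u n)).re) / u n ^ 2) atTop (𝓝 0)) :
    ∀ᵐ x ∂ρ, x = 0 := by
  set f : ℕ → ℝ → ℝ≥0∞ := fun n x =>
    ENNReal.ofReal (x ^ 2 * Real.sinc (u n * x / 2) ^ 2)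
  have hf_lim (x : ℝ) : Tendsto (fun n => f n x) atTop (𝓝 (ENNReal.ofReal (x ^ 2))) := by
    have hsinc : Tendsto (fun n => Real.sinc (u n * x / 2)) atTop (𝓝 1) := by
      have hθ : Tendsto (fun n => u n * x / 2) atTop (𝓝 0) := by
        simpa using (hu.mul_const x).div_const 2
      simpa [Function.comp_def] using (Real.continuous_sinc.tendsto 0).comp hθ
    simpa using ENNReal.tendsto_ofReal ((hsinc.pow 2).const_mul (x ^ 2))
  have hf_int (n : ℕ) :
      ∫⁻ x, f n x ∂ρ = ENNReal.ofReal (2 * ((1 - (charFun ρ (u n)).re) / u n ^ 2)) := by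
    have hcos : Integrable (fun x => Real.cos (u n * x)) ρ :=
      (integrable_const (1 : ℝ)).mono (by fun_prop)
        (ae_of_all _ fun x => by simpa using Real.abs_cos_le_one _)
    simp only [f, ← two_mul_one_sub_cos_div_sq (hu0 n)]
    rw [← ofReal_integral_eq_lintegral_ofReal, integral_const_mul, integral_div, integral_sub,
      integral_const, re_charFun_eq_integral_cos]
    · simp
    · exact integrable_const 1
    · exact hcos
    · exact (((integrable_const 1).sub hcos).div_const _).const_mul 2
    · exact ae_of_all _ fun x =>
        mul_nonneg zero_le_two (div_nonneg (sub_nonneg.2 (Real.cos_le_one _)) (sq_nonneg _))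
  have hsq : ∫⁻ x, ENNReal.ofReal (x ^ 2) ∂ρ = 0 := by
    refine nonpos_iff_eq_zero.1 ?_
    calc ∫⁻ x, ENNReal.ofReal (x ^ 2) ∂ρ = ∫⁻ x, liminf (fun n => f n x) atTop ∂ρ :=
          lintegral_congr fun x => (hf_lim x).liminf_eq.symm
      _ ≤ liminf (fun n => ∫⁻ x, f n x ∂ρ) atTop :=
          lintegral_liminf_le fun n => by fun_prop
      _ = 0 := by
        simp_rw [hf_int]
        simpa using (ENNReal.tendsto_ofReal (h.const_mul 2)).liminf_eq
  filter_upwards [(lintegral_eq_zero_iff (by fun_prop)).1 hsq] with x hx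
  simpa using hx

lemma tendsto_one_sub_div_sq_of_apply_mul_eq_sq {g : ℝ → ℝ} {c t₀ : ℝ} (hc : 1 < c)
    (hc2 : c ^ 2 < 2) (hg : ∀ u, g (c * u) = g u ^ 2) (hg1 : ∀ u, g u ≤ 1)
    (hgt₀ : 0 < g t₀) :
    Tendsto (fun n : ℕ => (1 - g (t₀ / c ^ n)) / (t₀ / c ^ n) ^ 2) atTop (𝓝 0) := by
  have hc0 : c ≠ 0 := by positivity
  have hg0 (u : ℝ) : 0 ≤ g u := by
    rw [show u = c * (u / c) by field_simp, hg]
    positivity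
  have hpow (n : ℕ) (u : ℝ) : g (c ^ n * u) = g u ^ 2 ^ n := by
    induction n generalizing u with
    | zero => simp
    | succ n ih => rw [pow_succ, mul_assoc, ih, hg, ← pow_mul, pow_succ, mul_comm]
  have hlog (n : ℕ) : 1 - g (t₀ / c ^ n) ≤ -Real.log (g t₀) / 2 ^ n := by
    have ht₀ : g t₀ = g (t₀ / c ^ n) ^ 2 ^ n := by
      rw [← hpow, mul_div_cancel₀ _ (pow_ne_zero n hc0)]
    have hpos : 0 < g (t₀ / c ^ n) := by
      refine (hg0 _).lt_of_ne fun h => ?_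
      rw [← h, zero_pow (by positivity)] at ht₀
      exact hgt₀.ne' ht₀
    calc 1 - g (t₀ / c ^ n) ≤ -Real.log (g (t₀ / c ^ n)) := by
          linarith [Real.log_le_sub_one_of_pos hpos]
      _ = -Real.log (g t₀) / 2 ^ n := by
          rw [ht₀, Real.log_pow]
          push_cast
          field_simp
  have hbound (n : ℕ) : (1 - g (t₀ / c ^ n)) / (t₀ / c ^ n) ^ 2
      ≤ -Real.log (g t₀) / t₀ ^ 2 * (c ^ 2 / 2) ^ n := by
    calc (1 - g (t₀ / c ^ n)) / (t₀ / c ^ n) ^ 2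
        ≤ -Real.log (g t₀) / 2 ^ n / (t₀ / c ^ n) ^ 2 := by gcongr; exact hlog n
      _ = -Real.log (g t₀) / t₀ ^ 2 * (c ^ 2 / 2) ^ n := by
        rw [div_pow, div_pow, ← pow_mul, ← pow_mul', pow_mul]
        field_simp
  have hlim :
      Tendsto (fun n : ℕ => -Real.log (g t₀) / t₀ ^ 2 * (c ^ 2 / 2) ^ n) atTop (𝓝 0) := by
    simpa using (_root_.tendsto_pow_atTop_nhds_zero_of_lt_one (by positivity)
      (by linarith)).const_mul (-Real.log (g t₀) / t₀ ^ 2)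
  refine squeeze_zero (fun n => div_nonneg (by linarith [hg1 (t₀ / c ^ n)]) (sq_nonneg _))
    hbound hlim

theorem ae_fst_eq_snd_of_charFun_sq_eq {ν : Measure ℝ} [IsProbabilityMeasure ν] {c : ℝ}
    (hc : 1 < c) (hc2 : c ^ 2 < 2) (hν : ∀ u, charFun ν u ^ 2 = charFun ν (c * u)) :
    ∀ᵐ z ∂(ν.prod ν), z.1 = z.2 := by
  set g : ℝ → ℝ := fun t => Complex.normSq (charFun ν t)
  have hg (u : ℝ) : g (c * u) = g u ^ 2 := by simp only [g, ← hν, map_pow]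
  have hg1 (u : ℝ) : g u ≤ 1 := by
    simpa [g, Complex.normSq_eq_norm_sq] using norm_charFun_le_one (μ := ν) u
  obtain ⟨t₀, hgt₀, ht₀⟩ : ∃ t₀, 0 < g t₀ ∧ t₀ ≠ 0 := by
    have hcont : Continuous g := Complex.continuous_normSq.comp continuous_charFun
    have hpos : ∀ᶠ t in 𝓝 (0 : ℝ), 0 < g t :=
      continuousAt_const.eventually_lt hcont.continuousAt (by simp [g])
    exact ((hpos.filter_mono nhdsWithin_le_nhds).and
      (self_mem_nhdsWithin : {(0 : ℝ)}ᶜ ∈ 𝓝[≠] 0)).exists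
  have hc0 : c ≠ 0 := by positivity
  set ρ := (ν.prod ν).map (fun z => z.1 - z.2)
  have : IsProbabilityMeasure ρ := Measure.isProbabilityMeasure_map (by fun_prop)
  have hρ : ∀ᵐ x ∂ρ, x = 0 := by
    refine ae_eq_zero_of_tendsto_one_sub_re_charFun_div_sq (u := fun n => t₀ / c ^ n) ?_
      (fun n => div_ne_zero ht₀ (pow_ne_zero n hc0)) ?_
    · simpa [div_eq_mul_inv] using (_root_.tendsto_pow_atTop_nhds_zero_of_lt_one (by positivity)
        (inv_lt_one_of_one_lt₀ hc)).const_mul t₀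
    · simpa [ρ, charFun_map_sub_prod] using
        tendsto_one_sub_div_sq_of_apply_mul_eq_sq hc hc2 hg hg1 hgt₀
  filter_upwards [ae_of_ae_map (by fun_prop) hρ] with z hz
  exact sub_eq_zero.1 hz

instance (μ lam : Measure ℝ) [IsProbabilityMeasure μ] [IsProbabilityMeasure lam] :
    IsProbabilityMeasure (mix μ lam) :=
  Measure.isProbabilityMeasure_map (by fun_prop)

lemma mix_singleton_le {μ : Measure ℝ} [IsProbabilityMeasure μ] (hμ : NontrivialMeasure μ)
    (lam : Measure ℝ) [SFinite lam] (y : ℝ) : mix μ lam {y} ≤ lam {0} := by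
  rw [mix, Measure.map_apply (by fun_prop) (measurableSet_singleton y),
    Measure.prod_apply_symm (measurableSet_singleton y |>.preimage (by fun_prop)),
    ← lintegral_indicator_one (measurableSet_singleton 0)]
  refine lintegral_mono fun s => ?_
  rcases eq_or_ne s 0 with rfl | hs
  · simpa using prob_le_one
  · have : (fun x => (x, s)) ⁻¹' ((fun z : ℝ × ℝ => z.1 * z.2) ⁻¹' {y}) = {y / s} := by
      ext x
      simp [eq_div_iff hs]
    simp [this, hμ (y / s)]

lemma prod_setOf_fst_eq_snd_le {ν : Measure ℝ} [IsProbabilityMeasure ν] {a : ℝ≥0∞}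
    (h : ∀ y, ν {y} ≤ a) : ν.prod ν {z | z.1 = z.2} ≤ a := by
  rw [Measure.prod_apply (measurableSet_eq_fun measurable_fst measurable_snd)]
  calc ∫⁻ x, ν ((fun y => (x, y)) ⁻¹' {z | z.1 = z.2}) ∂ν = ∫⁻ x, ν {x} ∂ν := by
        congr 1 with x
        congr 1 with y
        simp [eq_comm]
    _ ≤ ∫⁻ _, a ∂ν := lintegral_mono h
    _ = a := by simp

lemma eq_dirac_of_measure_singleton_eq_one {lam : Measure ℝ} [IsProbabilityMeasure lam] {x : ℝ}
    (h : lam {x} = 1) : lam = Measure.dirac x := by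
  have hae : ∀ᵐ y ∂lam, y ∈ ({x} : Set ℝ) :=
    (ae_iff_measure_eq (measurableSet_singleton x).nullMeasurableSet).2 (h.trans measure_univ.symm)
  rw [← Measure.restrict_eq_self_of_ae_mem hae, Measure.restrict_singleton, h, one_smul]

theorem stmt4_general (μ : Measure ℝ) (hμ : IsProbabilityMeasure μ) (hnt : NontrivialMeasure μ)
    (p : ℝ) (lam : Measure ℝ) (hlam : IsProbabilityMeasure lam) (hne : lam ≠ Measure.dirac 0)
    (hstab : ∀ a b : ℝ, 0 < a → 0 < b →
      mconv (rescale a (mix μ lam)) (rescale b (mix μ lam))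
        = rescale ((a ^ p + b ^ p) ^ (1 / p)) (mix μ lam)) :
    p ≤ 2 := by
  by_contra! hp
  set ν := mix μ lam
  set c : ℝ := 2 ^ (1 / p)
  have hc : 1 < c := Real.one_lt_rpow one_lt_two (by positivity)
  have hc2 : c ^ 2 < 2 := by
    rw [← Real.rpow_natCast, ← Real.rpow_mul zero_le_two]
    refine Real.rpow_lt_self_of_one_lt one_lt_two ?_
    rw [div_mul_eq_mul_div, div_lt_one (by linarith)]
    push_cast
    linarith
  have hfe (u : ℝ) : charFun ν u ^ 2 = charFun ν (c * u) := by
    have h := congrArg (charFun · u) (hstab 1 1 one_pos one_pos)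
    simp only [rescale, Real.one_rpow, one_add_one_eq_two, one_mul, Measure.map_id'] at h
    rw [← charFun_map_mul, sq, ← charFun_conv]
    exact h
  have hdiag : ν.prod ν {z | z.1 = z.2} = 1 := by
    rw [← measure_univ (μ := ν.prod ν)]
    have hmeas : MeasurableSet {z : ℝ × ℝ | z.1 = z.2} :=
      measurableSet_eq_fun measurable_fst measurable_snd
    exact (ae_iff_measure_eq hmeas.nullMeasurableSet).1 (ae_fst_eq_snd_of_charFun_sq_eq hc hc2 hfe)
  have hlam0 : lam {0} = 1 :=
    le_antisymm prob_le_one (hdiag ▸ prod_setOf_fst_eq_snd_le (mix_singleton_le hnt lam))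
  exact hne (eq_dirac_of_measure_singleton_eq_one hlam0)

theorem stmt4 (μ : Measure ℝ) (hμ : IsProbabilityMeasure μ) (hnt : NontrivialMeasure μ)
    (hws : WeaklyStable μ) (p : ℝ) (hp : 0 < p)
    (lam : Measure ℝ) (hlam : IsProbabilityMeasure lam) (hne : lam ≠ Measure.dirac 0)
    (hstab : ∀ a b : ℝ, 0 < a → 0 < b →
      mconv (rescale a (mix μ lam)) (rescale b (mix μ lam))
        = rescale ((a ^ p + b ^ p) ^ (1 / p)) (mix μ lam)) :
    p ≤ 2 :=
  stmt4_general μ hμ hnt p lam hlam hne hstab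
end
end

section
/- Let μ be a nontrivial symmetric weakly stable probability measure on ℝ, let λ be μ-weakly infinitely divisible, let {λ^r : r ≥ 0} be a convolution semigroup family for (μ,λ), and let t_n ↘ 0. Then for every t ∈ ℝ, the characteristic function of μ∘λ satisfies (μ∘λ)^(t) = lim_{n→∞} exp( − ∫_ℝ (1 − μ̂(ts)) t_n^{−1} λ^{t_n}(ds) ). -/
open MeasureTheory Filter Topology ENNReal BoundedContinuousFunction

noncomputable section

/-!
For symmetric `μ` characteristic functions are real, so `G r := (μ ∘ λ^r)^(s)` is a real
function on `[0, ∞)`. The semigroup property turns into `G (r + r') = G r * G r'`, and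
`λ^0 = δ_0`, `λ^r → δ_0` give `G 0 = 1`, `G (0+) = 1`; such a `G` equals `G 1 ^ r` with `G 1 > 0`.
The integral in the statement is `1 - G (t n)`, so the exponent is the difference quotient
`(G (t n) - 1) / t n`, which tends to `log (G 1)`, and `G 1 = (μ ∘ λ)^(s)`.
-/

section FunctionalEquation

variable {G : ℝ → ℝ} (h0 : G 0 = 1)
  (hmul : ∀ r r' : ℝ, 0 ≤ r → 0 ≤ r' → G (r + r') = G r * G r')
include hmul

lemma nonneg_of_map_add_eq_mul {r : ℝ} (hr : 0 ≤ r) : 0 ≤ G r := by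
  have h := hmul (r / 2) (r / 2) (by positivity) (by positivity)
  rw [add_halves] at h
  exact h ▸ mul_self_nonneg _

include h0

lemma map_nat_mul_eq_pow_of_map_add_eq_mul (n : ℕ) {r : ℝ} (hr : 0 ≤ r) :
    G (n * r) = G r ^ n := by
  induction n with
  | zero => simp [h0]
  | succ n ih => rw [Nat.cast_succ, add_mul, one_mul, hmul _ _ (by positivity) hr, ih, pow_succ]

lemma map_div_eq_rpow_of_map_add_eq_mul (p n : ℕ) : G (p / n) = G 1 ^ ((p : ℝ) / n) := by
  rcases Nat.eq_zero_or_pos n with rfl | hn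
  · simp [h0]
  have hn' : (n : ℝ) ≠ 0 := by positivity
  have hG1 : 0 ≤ G 1 := nonneg_of_map_add_eq_mul hmul zero_le_one
  refine (pow_left_inj₀ (nonneg_of_map_add_eq_mul hmul (by positivity))
    (Real.rpow_nonneg hG1 _) hn.ne').mp ?_
  rw [← map_nat_mul_eq_pow_of_map_add_eq_mul h0 hmul n (by positivity), mul_div_cancel₀ _ hn',
    ← Real.rpow_natCast, ← Real.rpow_mul hG1, div_mul_cancel₀ _ hn', Real.rpow_natCast,
    ← map_nat_mul_eq_pow_of_map_add_eq_mul h0 hmul p zero_le_one, mul_one]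

variable (hcont : Tendsto G (𝓝[>] 0) (𝓝 1))
include hcont

lemma map_one_pos_of_map_add_eq_mul : 0 < G 1 := by
  refine (nonneg_of_map_add_eq_mul hmul zero_le_one).lt_of_ne fun h => zero_ne_one (α := ℝ) ?_
  have hseq : Tendsto (fun n : ℕ => 1 / ((n : ℝ) + 1)) atTop (𝓝[>] 0) :=
    tendsto_nhdsWithin_iff.mpr ⟨tendsto_one_div_add_atTop_nhds_zero_nat,
      Eventually.of_forall fun n => Set.mem_Ioi.mpr (by positivity)⟩
  refine tendsto_nhds_unique (tendsto_const_nhds.congr fun n => ?_) (hcont.comp hseq)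
  have := map_div_eq_rpow_of_map_add_eq_mul h0 hmul 1 (n + 1)
  rw [← h, Real.zero_rpow (by positivity)] at this
  simpa using this.symm

lemma eq_rpow_of_map_add_eq_mul {r : ℝ} (hr : 0 ≤ r) : G r = G 1 ^ r := by
  set a : ℕ → ℝ := fun n => (⌊r * n⌋₊ : ℕ) / (n : ℕ)
  have ha : Tendsto a atTop (𝓝 r) :=
    (tendsto_nat_floor_mul_div_atTop hr).comp tendsto_natCast_atTop_atTop
  have ha_le : ∀ n, a n ≤ r := fun n => by
    rcases Nat.eq_zero_or_pos n with rfl | hn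
    · simpa [a] using hr
    exact (div_le_iff₀ (by positivity)).mpr (Nat.floor_le (by positivity))
  have hgap : Tendsto (fun n => G (r - a n)) atTop (𝓝 1) := by
    have hG : Tendsto G (𝓝[≥] 0) (𝓝 1) := by
      rw [← Set.Ioi_insert, nhdsWithin_insert, tendsto_sup]
      exact ⟨by simpa [h0] using tendsto_pure_nhds G 0, hcont⟩
    refine hG.comp (tendsto_nhdsWithin_iff.mpr ⟨?_, Eventually.of_forall fun n => ?_⟩)
    · simpa using (tendsto_const_nhds (x := r)).sub ha
    · exact sub_nonneg.mpr (ha_le n)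
  have hsplit : ∀ n, G r = G 1 ^ a n * G (r - a n) := fun n => by
    rw [← map_div_eq_rpow_of_map_add_eq_mul h0 hmul, ← hmul _ _ (by positivity)
      (sub_nonneg.mpr (ha_le n)), add_sub_cancel]
  have hlim := ((Real.continuous_const_rpow
    (map_one_pos_of_map_add_eq_mul h0 hmul hcont).ne').tendsto r |>.comp ha).mul hgap
  rw [mul_one] at hlim
  exact tendsto_nhds_unique (tendsto_const_nhds.congr hsplit) hlim

lemma tendsto_exp_sub_one_div_of_map_add_eq_mul :
    Tendsto (fun r => Real.exp ((G r - 1) / r)) (𝓝[>] 0) (𝓝 (G 1)) := by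
  have hc := map_one_pos_of_map_add_eq_mul h0 hmul hcont
  have hslope := (hasDerivAt_iff_tendsto_slope.mp
    (Real.hasStrictDerivAt_const_rpow hc 0).hasDerivAt).mono_left
    (nhdsWithin_mono _ fun r hr => ne_of_gt hr)
  rw [Real.rpow_zero, one_mul] at hslope
  have := (Real.continuous_exp.tendsto _).comp hslope
  rw [Real.exp_log hc] at this
  refine this.congr' (eventually_nhdsWithin_of_forall fun r (hr : 0 < r) => ?_)
  dsimp only
  rw [Function.comp_apply, slope_def_field, Real.rpow_zero, sub_zero,
    eq_rpow_of_map_add_eq_mul h0 hmul hcont (le_of_lt hr)]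

end FunctionalEquation

open Complex

lemma charFun'_eq_charFun : charFun' = charFun :=
  funext₂ fun _ t => (charFun_apply_real t).symm

instance isProbabilityMeasure_mix (μ ν : Measure ℝ) [IsProbabilityMeasure μ]
    [IsProbabilityMeasure ν] : IsProbabilityMeasure (mix μ ν) :=
  Measure.isProbabilityMeasure_map (by fun_prop)

lemma integrable_charFun_mul (μ ν : Measure ℝ) [IsProbabilityMeasure μ] [IsFiniteMeasure ν]
    (s : ℝ) : Integrable (fun u => charFun μ (s * u)) ν :=
  (integrable_const (1 : ℝ)).mono' (by fun_prop)
    (Eventually.of_forall fun _ => norm_charFun_le_one _)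

lemma charFun_mix (μ ν : Measure ℝ) [IsFiniteMeasure μ] [IsFiniteMeasure ν] (s : ℝ) :
    charFun (mix μ ν) s = ∫ u, charFun μ (s * u) ∂ν := by
  have hint : Integrable (fun p : ℝ × ℝ => cexp (s * (p.1 * p.2 : ℝ) * I)) (μ.prod ν) :=
    (integrable_const (1 : ℝ)).mono' (by fun_prop)
      (Eventually.of_forall fun p => by rw [← Complex.ofReal_mul, norm_exp_ofReal_mul_I])
  rw [charFun_apply_real, mix, integral_map (by fun_prop) (by fun_prop), integral_prod_symm _ hint]
  refine integral_congr_ae (Eventually.of_forall fun u => ?_)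
  simp only [charFun_apply_real]
  congr with x
  push_cast
  ring_nf

lemma SymmetricMeasure.ofReal_re_charFun {μ : Measure ℝ} (hμ : SymmetricMeasure μ) (t : ℝ) :
    ((charFun μ t).re : ℂ) = charFun μ t := by
  refine conj_eq_iff_re.mp ?_
  rw [← charFun_neg, ← neg_one_mul, ← charFun_map_mul, ← rescale, hμ]

lemma SymmetricMeasure.charFun_mix {μ : Measure ℝ} [IsProbabilityMeasure μ]
    (hμ : SymmetricMeasure μ) (ν : Measure ℝ) [IsFiniteMeasure ν] (s : ℝ) :
    charFun (mix μ ν) s = ((∫ u, (charFun μ (s * u)).re ∂ν : ℝ) : ℂ) := by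
  rw [_root_.charFun_mix, ← integral_complex_ofReal]
  exact integral_congr_ae (Eventually.of_forall fun u => (hμ.ofReal_re_charFun _).symm)

lemma mconv_eq_conv (μ ν : Measure ℝ) : mconv μ ν = μ ∗ ν := rfl

lemma integral_one_sub_charFun_mul (μ ν : Measure ℝ) [IsProbabilityMeasure μ]
    [IsProbabilityMeasure ν] (s : ℝ) :
    ∫ u, (1 - charFun μ (s * u)) ∂ν = 1 - charFun (mix μ ν) s := by
  rw [integral_sub (integrable_const 1) (integrable_charFun_mul μ ν s), charFun_mix,
    integral_const, probReal_univ, one_smul]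

theorem stmt10_general (μ lam : Measure ℝ)
    (hμ : IsProbabilityMeasure μ)
    (hsym : SymmetricMeasure μ)
    (L : ℝ → Measure ℝ) (hL : ConvSemigroupFamily μ lam L)
    (t : ℕ → ℝ) (htpos : ∀ n, 0 < t n)
    (ht0 : Tendsto t atTop (𝓝 0)) :
    ∀ s : ℝ,
      Tendsto (fun n =>
          Complex.exp (-(((t n : ℝ) : ℂ))⁻¹ * ∫ u, (1 - charFun' μ (s * u)) ∂(L (t n))))
        atTop (𝓝 (charFun' (mix μ lam) s)) := by
  obtain ⟨hprob, hL0, hL1, hsemigroup, hcont⟩ := hL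
  intro s
  rw [charFun'_eq_charFun]
  let g : ℝ →ᵇ ℝ := .ofNormedAddCommGroup (fun u => (charFun μ (s * u)).re) (by fun_prop) 1
    fun u => (abs_re_le_norm _).trans (norm_charFun_le_one _)
  set G : ℝ → ℝ := fun r => ∫ u, g u ∂(L r)
  have hG : ∀ r, 0 ≤ r → charFun (mix μ (L r)) s = G r := fun r hr =>
    have := hprob r hr
    hsym.charFun_mix (L r) s
  have h0 : G 0 = 1 := by simp [G, g, hL0]
  have hmul : ∀ r r', 0 ≤ r → 0 ≤ r' → G (r + r') = G r * G r' := by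
    intro r r' hr hr'
    have := hprob r hr
    have := hprob r' hr'
    have h := congrArg (charFun · s) (hsemigroup r r' hr hr')
    rw [mconv_eq_conv, charFun_conv, hG r hr, hG r' hr', hG _ (add_nonneg hr hr')] at h
    exact_mod_cast h.symm
  have hGcont : Tendsto G (𝓝[>] 0) (𝓝 1) := by
    have hg0 : g 0 = 1 := by simp [g]
    exact hg0 ▸ hcont g
  have ht : Tendsto t atTop (𝓝[>] 0) := tendsto_nhdsWithin_iff.mpr ⟨ht0, .of_forall htpos⟩
  rw [← hL1, hG 1 zero_le_one]
  refine ((Complex.continuous_ofReal.tendsto _).comp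
    ((tendsto_exp_sub_one_div_of_map_add_eq_mul h0 hmul hGcont).comp ht)).congr fun n => ?_
  have := hprob (t n) (htpos n).le
  rw [Function.comp_apply, Function.comp_apply, Complex.ofReal_exp, integral_one_sub_charFun_mul,
    hG _ (htpos n).le]
  push_cast
  congr 1
  ring

theorem stmt10 (μ lam : Measure ℝ)
    (hμ : IsProbabilityMeasure μ) (hnt : NontrivialMeasure μ)
    (hsym : SymmetricMeasure μ) (hws : WeaklyStable μ)
    (hlam : IsProbabilityMeasure lam) (hdiv : MuWeaklyInfDiv μ lam)
    (L : ℝ → Measure ℝ) (hL : ConvSemigroupFamily μ lam L)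
    (t : ℕ → ℝ) (htpos : ∀ n, 0 < t n) (htanti : StrictAnti t)
    (ht0 : Tendsto t atTop (𝓝 0)) :
    ∀ s : ℝ,
      Tendsto (fun n =>
          Complex.exp (-(((t n : ℝ) : ℂ))⁻¹ * ∫ u, (1 - charFun' μ (s * u)) ∂(L (t n))))
        atTop (𝓝 (charFun' (mix μ lam) s)) :=
  stmt10_general μ lam hμ hsym L hL t htpos ht0
end
end

section
/- Let 0 < p ≤ α ≤ 1 and define g_p(s) = (p/α)·((α−p) s^{−p−1} + p s^{−2p−1})·e^{−s^{−p}} for s > 0. Then g_p is a probability density on (0,∞) (i.e. ∫_0^∞ g_p(s) ds = 1), and for every t ∈ ℝ, ∫_0^∞ (1 − (|t| s)^α)_+ · g_p(s) ds = exp(−|t|^p), where x_+ = max(x,0). -/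
open MeasureTheory Filter Topology ENNReal BoundedContinuousFunction

noncomputable section

/-! The density `g` has the explicit distribution function `G(s) = e^{-s^{-p}} (1 + (p/α) s^{-p})`,
and `s^α g(s)` has the explicit primitive `H(s) = (p/α) s^{α-p} e^{-s^{-p}}`, both vanishing at
`0⁺`. Since `(1 - (cs)^α)_+` is supported on `(0, 1/c]`, the mixture integral is
`G(1/c) - c^α H(1/c) = e^{-c^p}` by the fundamental theorem of calculus. -/

namespace KendallMixing

open Set Real

def mixingDensity (p α s : ℝ) : ℝ :=
  p / α * ((α - p) * s ^ (-p - 1) + p * s ^ (-(2 * p) - 1)) * exp (-s ^ (-p))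

def mixingCDF (p α s : ℝ) : ℝ :=
  if 0 < s then exp (-s ^ (-p)) * (1 + p / α * s ^ (-p)) else 0

def mixingPartialMoment (p α s : ℝ) : ℝ :=
  if 0 < s then p / α * s ^ (α - p) * exp (-s ^ (-p)) else 0

variable {p α s : ℝ}

theorem mixingDensity_nonneg (hp : 0 < p) (hpα : p ≤ α) (hs : 0 < s) :
    0 ≤ mixingDensity p α s := by
  have : 0 ≤ α - p := sub_nonneg.mpr hpα
  have : 0 < α := hp.trans_le hpα
  unfold mixingDensity
  positivity

theorem hasDerivAt_exp_neg_rpow_neg (p : ℝ) (hs : 0 < s) :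
    HasDerivAt (fun x => exp (-x ^ (-p))) (p * s ^ (-p - 1) * exp (-s ^ (-p))) s := by
  have := (Real.hasDerivAt_rpow_const (p := -p) (Or.inl hs.ne')).neg.exp
  simp only [Pi.neg_apply] at this
  convert this using 1
  ring

theorem hasDerivAt_mixingCDF (hα : α ≠ 0) (hs : 0 < s) :
    HasDerivAt (mixingCDF p α) (mixingDensity p α s) s := by
  have hG : HasDerivAt (fun x => exp (-x ^ (-p)) * (1 + p / α * x ^ (-p)))
      (p * s ^ (-p - 1) * exp (-s ^ (-p)) * (1 + p / α * s ^ (-p)) +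
        exp (-s ^ (-p)) * (p / α * (-p * s ^ (-p - 1)))) s :=
    (hasDerivAt_exp_neg_rpow_neg p hs).mul
      (((Real.hasDerivAt_rpow_const (Or.inl hs.ne')).const_mul (p / α)).const_add 1)
  have hpow : s ^ (-p - 1) * s ^ (-p) = s ^ (-(2 * p) - 1) := by
    rw [← Real.rpow_add hs]; ring_nf
  refine (hG.congr_of_eventuallyEq ?_).congr_deriv ?_
  · filter_upwards [Ioi_mem_nhds hs] with x hx
    simp [mixingCDF, mem_Ioi.mp hx]
  · unfold mixingDensity
    rw [← hpow]
    field_simp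
    ring

theorem hasDerivAt_mixingPartialMoment (hs : 0 < s) :
    HasDerivAt (mixingPartialMoment p α) (s ^ α * mixingDensity p α s) s := by
  have hH : HasDerivAt (fun x => p / α * x ^ (α - p) * exp (-x ^ (-p)))
      (p / α * ((α - p) * s ^ (α - p - 1)) * exp (-s ^ (-p)) +
        p / α * s ^ (α - p) * (p * s ^ (-p - 1) * exp (-s ^ (-p)))) s :=
    ((Real.hasDerivAt_rpow_const (Or.inl hs.ne')).const_mul (p / α)).mul
      (hasDerivAt_exp_neg_rpow_neg p hs)
  have hpow₁ : s ^ (α - p - 1) = s ^ α * s ^ (-p - 1) := by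
    rw [← Real.rpow_add hs]; ring_nf
  have hpow₂ : s ^ (α - p) * s ^ (-p - 1) = s ^ α * s ^ (-(2 * p) - 1) := by
    rw [← Real.rpow_add hs, ← Real.rpow_add hs]; ring_nf
  refine (hH.congr_of_eventuallyEq ?_).congr_deriv ?_
  · filter_upwards [Ioi_mem_nhds hs] with x hx
    simp [mixingPartialMoment, mem_Ioi.mp hx]
  · unfold mixingDensity
    rw [hpow₁]
    linear_combination p / α * p * exp (-s ^ (-p)) * hpow₂

theorem continuousWithinAt_mixingCDF (hp : 0 < p) :
    ContinuousWithinAt (mixingCDF p α) (Ici 0) 0 := by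
  have hu : Tendsto (fun u => exp (-u) * (1 + p / α * u)) atTop (𝓝 0) := by
    have := tendsto_exp_neg_atTop_nhds_zero.add
      ((tendsto_pow_mul_exp_neg_atTop_nhds_zero 1).const_mul (p / α))
    simp only [pow_one, add_zero, mul_zero] at this
    exact this.congr fun u => by ring
  rw [← continuousWithinAt_Ioi_iff_Ici, ContinuousWithinAt]
  refine ((hu.comp (tendsto_rpow_neg_nhdsGT_zero (neg_lt_zero.mpr hp))).congr' ?_).trans ?_
  · filter_upwards [self_mem_nhdsWithin] with x hx
    simp [mixingCDF, mem_Ioi.mp hx]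
  · simp [mixingCDF]

theorem continuousWithinAt_mixingPartialMoment (hp : 0 < p) (hpα : p ≤ α) :
    ContinuousWithinAt (mixingPartialMoment p α) (Ici 0) 0 := by
  have hpow : Tendsto (fun x : ℝ => x ^ (α - p)) (𝓝[>] 0) (𝓝 ((0 : ℝ) ^ (α - p))) :=
    (Real.continuousAt_rpow_const 0 _ (Or.inr (sub_nonneg.mpr hpα))).tendsto.mono_left
      nhdsWithin_le_nhds
  have hexp : Tendsto (fun x : ℝ => exp (-x ^ (-p))) (𝓝[>] 0) (𝓝 0) :=
    tendsto_exp_neg_atTop_nhds_zero.comp (tendsto_rpow_neg_nhdsGT_zero (neg_lt_zero.mpr hp))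
  rw [← continuousWithinAt_Ioi_iff_Ici, ContinuousWithinAt]
  refine (((hpow.const_mul (p / α)).mul hexp).congr' ?_).trans ?_
  · filter_upwards [self_mem_nhdsWithin] with x hx
    simp [mixingPartialMoment, mem_Ioi.mp hx]
  · simp [mixingPartialMoment]

theorem tendsto_mixingCDF_atTop (hp : 0 < p) : Tendsto (mixingCDF p α) atTop (𝓝 1) := by
  have hu : Tendsto (fun s : ℝ => s ^ (-p)) atTop (𝓝 0) := tendsto_rpow_neg_atTop hp
  have := ((Real.continuous_exp.tendsto _).comp hu.neg).mul ((hu.const_mul (p / α)).const_add 1)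
  simp only [neg_zero, exp_zero, mul_zero, add_zero, one_mul] at this
  refine this.congr' ?_
  filter_upwards [Ioi_mem_atTop 0] with x hx
  simp [mixingCDF, mem_Ioi.mp hx]

theorem integral_mixingDensity (hp : 0 < p) (hpα : p ≤ α) :
    ∫ s in Ioi 0, mixingDensity p α s = 1 := by
  have hα : α ≠ 0 := (hp.trans_le hpα).ne'
  simpa [mixingCDF] using integral_Ioi_of_hasDerivAt_of_nonneg (continuousWithinAt_mixingCDF hp)
    (fun x hx => hasDerivAt_mixingCDF hα hx) (fun x hx => mixingDensity_nonneg hp hpα hx)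
    (tendsto_mixingCDF_atTop hp)

theorem mixingCDF_inv_sub_rpow_mul_mixingPartialMoment_inv {c : ℝ} (hc : 0 < c) :
    mixingCDF p α c⁻¹ - c ^ α * mixingPartialMoment p α c⁻¹ = exp (-c ^ p) := by
  have hneg : c⁻¹ ^ (-p) = c ^ p := by
    rw [Real.inv_rpow hc.le, Real.rpow_neg hc.le, inv_inv]
  have hcancel : c ^ α * c⁻¹ ^ (α - p) = c ^ p := by
    rw [Real.inv_rpow hc.le, ← div_eq_mul_inv, ← Real.rpow_sub hc]
    ring_nf
  simp only [mixingCDF, mixingPartialMoment, inv_pos.mpr hc, if_true, hneg]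
  linear_combination (-(p / α) * exp (-c ^ p)) * hcancel

theorem integral_max_one_sub_rpow_mul_mixingDensity (hp : 0 < p) (hpα : p ≤ α) {c : ℝ}
    (hc : 0 < c) :
    ∫ s in Ioi 0, max (1 - (c * s) ^ α) 0 * mixingDensity p α s = exp (-c ^ p) := by
  have hα : 0 < α := hp.trans_le hpα
  have hb : 0 < c⁻¹ := inv_pos.mpr hc
  set F := fun s => mixingCDF p α s - c ^ α * mixingPartialMoment p α s
  have hF' : ∀ s, 0 < s → HasDerivAt F ((1 - (c * s) ^ α) * mixingDensity p α s) s := by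
    intro s hs
    refine ((hasDerivAt_mixingCDF hα.ne' hs).sub
      ((hasDerivAt_mixingPartialMoment hs).const_mul (c ^ α))).congr_deriv ?_
    rw [Real.mul_rpow hc.le hs.le]
    ring
  have hFcont : ContinuousOn F (Icc 0 c⁻¹) := by
    rintro s ⟨hs₀, -⟩
    rcases hs₀.eq_or_lt with rfl | hs
    · exact ((continuousWithinAt_mixingCDF hp).sub
        ((continuousWithinAt_mixingPartialMoment hp hpα).const_mul _)).mono Icc_subset_Ici_self
    · exact (hF' s hs).continuousAt.continuousWithinAt
  have hle_one : ∀ s ∈ Ioc 0 c⁻¹, (c * s) ^ α ≤ 1 := fun s hs =>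
    Real.rpow_le_one (mul_pos hc hs.1).le
      ((le_inv_mul_iff₀ hc).mp (by rw [mul_one]; exact hs.2)) hα.le
  have hF'_nonneg : ∀ s ∈ Ioo 0 c⁻¹, 0 ≤ (1 - (c * s) ^ α) * mixingDensity p α s :=
    fun s hs => mul_nonneg (sub_nonneg.mpr (hle_one s (Ioo_subset_Ioc_self hs)))
      (mixingDensity_nonneg hp hpα hs.1)
  calc ∫ s in Ioi 0, max (1 - (c * s) ^ α) 0 * mixingDensity p α s
      = ∫ s in Ioc 0 c⁻¹, max (1 - (c * s) ^ α) 0 * mixingDensity p α s := by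
        refine setIntegral_eq_of_subset_of_forall_sdiff_eq_zero measurableSet_Ioi
          Ioc_subset_Ioi_self fun s ⟨hs, hs'⟩ => ?_
        have : 1 ≤ (c * s) ^ α := Real.one_le_rpow
          ((inv_lt_iff_one_lt_mul₀' hc).mp (not_le.mp (not_and.mp hs' hs))).le hα.le
        rw [max_eq_right (by linarith), zero_mul]
    _ = ∫ s in Ioc 0 c⁻¹, (1 - (c * s) ^ α) * mixingDensity p α s :=
        setIntegral_congr_fun measurableSet_Ioc fun s hs => by
          rw [max_eq_left (sub_nonneg.mpr (hle_one s hs))]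
    _ = F c⁻¹ - F 0 := by
        rw [← intervalIntegral.integral_of_le hb.le]
        exact intervalIntegral.integral_eq_sub_of_hasDerivAt_of_le hb.le hFcont
          (fun s hs => hF' s hs.1) ((intervalIntegrable_iff_integrableOn_Ioc_of_le hb.le).mpr
            (intervalIntegral.integrableOn_deriv_of_nonneg hFcont (fun s hs => hF' s hs.1)
              hF'_nonneg))
    _ = exp (-c ^ p) := by
        simp only [F]
        rw [mixingCDF_inv_sub_rpow_mul_mixingPartialMoment_inv hc]
        simp [mixingCDF, mixingPartialMoment]

end KendallMixing

theorem stmt18_general (p α : ℝ) (hp : 0 < p) (hpα : p ≤ α) :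
    (∫ s in Set.Ioi (0 : ℝ),
        p / α * ((α - p) * s ^ (-p - 1) + p * s ^ (-(2 * p) - 1)) * Real.exp (-s ^ (-p))
      = 1) ∧
    ∀ t : ℝ,
      ∫ s in Set.Ioi (0 : ℝ),
          max (1 - (|t| * s) ^ α) 0 *
            (p / α * ((α - p) * s ^ (-p - 1) + p * s ^ (-(2 * p) - 1)) *
              Real.exp (-s ^ (-p)))
        = Real.exp (-(|t| ^ p)) := by
  refine ⟨KendallMixing.integral_mixingDensity hp hpα, fun t => ?_⟩
  rcases (abs_nonneg t).eq_or_lt with ht | ht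
  · rw [← ht]
    simp only [zero_mul, Real.zero_rpow (hp.trans_le hpα).ne', Real.zero_rpow hp.ne', sub_zero,
      max_eq_left zero_le_one, one_mul, neg_zero, Real.exp_zero]
    exact KendallMixing.integral_mixingDensity hp hpα
  · exact KendallMixing.integral_max_one_sub_rpow_mul_mixingDensity hp hpα ht

theorem stmt18 (p α : ℝ) (hp : 0 < p) (hpα : p ≤ α) (hα : α ≤ 1) :
    (∫ s in Set.Ioi (0 : ℝ),
        p / α * ((α - p) * s ^ (-p - 1) + p * s ^ (-(2 * p) - 1)) * Real.exp (-s ^ (-p))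
      = 1) ∧
    ∀ t : ℝ,
      ∫ s in Set.Ioi (0 : ℝ),
          max (1 - (|t| * s) ^ α) 0 *
            (p / α * ((α - p) * s ^ (-p - 1) + p * s ^ (-(2 * p) - 1)) *
              Real.exp (-s ^ (-p)))
        = Real.exp (-(|t| ^ p)) :=
  stmt18_general p α hp hpα
end
end

section
/- Let n ≥ 2 and let ω_n be the uniform (rotation-invariant) probability measure on the unit sphere S^{n−1} ⊂ ℝ^n. Then ω_n is weakly stable: for all a, b ∈ ℝ there exists a probability measure λ on [0,∞) such that (T_a ω_n) ∗ (T_b ω_n) = ω_n∘λ; explicitly, one may take λ to be the law of ‖aU + bU′‖_2 for independent random vectors U, U′ each distributed according to ω_n. -/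
open MeasureTheory Filter Topology ENNReal

noncomputable section

/-- `T_c μ` on `ℝ^n`: pushforward of `μ` under `x ↦ c • x`. -/
def rescaleE (n : ℕ) (c : ℝ) (μ : Measure (EuclideanSpace ℝ (Fin n))) :
    Measure (EuclideanSpace ℝ (Fin n)) := μ.map (fun x => c • x)

/-- Scale mixture `μ ∘ lam` for a measure `μ` on `ℝ^n` and a measure `lam` on `ℝ`:
pushforward of `μ × lam` under `(x, s) ↦ s • x`. -/
def mixE (n : ℕ) (μ : Measure (EuclideanSpace ℝ (Fin n))) (lam : Measure ℝ) :
    Measure (EuclideanSpace ℝ (Fin n)) := (μ.prod lam).map (fun p => p.2 • p.1)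

/-- Convolution of two measures on `ℝ^n`. -/
def mconvE (n : ℕ) (μ ν : Measure (EuclideanSpace ℝ (Fin n))) :
    Measure (EuclideanSpace ℝ (Fin n)) := (μ.prod ν).map (fun p => p.1 + p.2)

/-!
The law `ν` of `aU + bU'` is rotation invariant, so its characteristic function `ν̂` is radial,
and so is `ω̂`. As `ω` lives on the unit sphere, `ν̂ t = ∫ ν̂ (‖t‖ θ) dω(θ)`; Fubini
turns this into `∫ ω̂ (‖t‖ x) dν(x)`, and radiality of `ω̂` into `∫ ω̂ (‖x‖ t) dν(x)`, which is the
characteristic function of the scale mixture of `ω` by the law of `‖x‖` under `ν`.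
-/

open Complex

lemma exists_linearIsometryEquiv_apply_eq {E : Type*} [NormedAddCommGroup E]
    [InnerProductSpace ℝ E] {v w : E} (h : ‖v‖ = ‖w‖) : ∃ f : E ≃ₗᵢ[ℝ] E, f v = w :=
  ⟨Submodule.reflection (ℝ ∙ (v - w))ᗮ, Submodule.reflection_sub h⟩

lemma integrable_cexp_ofReal_mul_I {α : Type*} [MeasurableSpace α] {μ : Measure α}
    [IsFiniteMeasure μ] {f : α → ℝ} (hf : Measurable f) :
    Integrable (fun x => cexp (f x * I)) μ :=
  Integrable.of_bound (by fun_prop) 1 (ae_of_all _ fun x => (norm_exp_ofReal_mul_I _).le)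

section RotationInvariant

variable {E : Type*} [NormedAddCommGroup E] [InnerProductSpace ℝ E] [MeasurableSpace E]
  [BorelSpace E]

def IsRotationInvariant (μ : Measure E) : Prop :=
  ∀ f : E ≃ₗᵢ[ℝ] E, μ.map f = μ

lemma charFun_map_linearIsometryEquiv (μ : Measure E) (f : E ≃ₗᵢ[ℝ] E) (t : E) :
    charFun (μ.map f) t = charFun μ (f.symm t) := by
  rw [charFun_apply, charFun_apply, integral_map (by fun_prop) (by fun_prop)]
  simp_rw [LinearIsometryEquiv.inner_map_eq_flip]

lemma IsRotationInvariant.charFun_eq_of_norm_eq {μ : Measure E} (hμ : IsRotationInvariant μ)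
    {s t : E} (h : ‖s‖ = ‖t‖) : charFun μ s = charFun μ t := by
  obtain ⟨f, hf⟩ := exists_linearIsometryEquiv_apply_eq h.symm
  calc charFun μ s = charFun (μ.map f) s := by rw [hμ f]
    _ = charFun μ t := by rw [charFun_map_linearIsometryEquiv, ← hf, f.symm_apply_apply]

lemma IsRotationInvariant.map_smul_add_smul [SecondCountableTopology E] {μ ν : Measure E}
    [SigmaFinite μ] [SigmaFinite ν] (hμ : IsRotationInvariant μ) (hν : IsRotationInvariant ν)
    (a b : ℝ) : IsRotationInvariant ((μ.prod ν).map fun p => a • p.1 + b • p.2) := by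
  intro f
  have hcomm : (f ∘ fun p : E × E => a • p.1 + b • p.2)
      = (fun p : E × E => a • p.1 + b • p.2) ∘ Prod.map f f := by
    ext p
    simp
  rw [Measure.map_map (by fun_prop) (by fun_prop), hcomm,
    ← Measure.map_map (by fun_prop) (by fun_prop),
    ← Measure.map_prod_map _ _ (by fun_prop) (by fun_prop), hμ f, hν f]

end RotationInvariant

section ScaleMixture

variable {E : Type*} [NormedAddCommGroup E] [InnerProductSpace ℝ E] [MeasurableSpace E]
  [BorelSpace E] [SecondCountableTopology E]

lemma charFun_map_smul_prod (μ : Measure E) (lam : Measure ℝ) [IsFiniteMeasure μ]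
    [IsFiniteMeasure lam] (t : E) :
    charFun ((μ.prod lam).map fun p => p.2 • p.1) t = ∫ s, charFun μ (s • t) ∂lam := by
  rw [charFun_apply, integral_map (by fun_prop) (by fun_prop), integral_prod_symm]
  · simp_rw [charFun_apply, real_inner_smul_left, inner_smul_right]
  · exact integrable_cexp_ofReal_mul_I (by fun_prop)

lemma integral_charFun_smul_comm (μ ν : Measure E) [IsFiniteMeasure μ] [IsFiniteMeasure ν]
    (r : ℝ) : ∫ x, charFun μ (r • x) ∂ν = ∫ y, charFun ν (r • y) ∂μ := by
  simp_rw [charFun_apply]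
  rw [integral_integral_swap]
  · simp_rw [inner_smul_right, real_inner_comm]
  · exact integrable_cexp_ofReal_mul_I (by fun_prop)

lemma IsRotationInvariant.eq_map_smul_prod_map_norm [CompleteSpace E] {ν ω : Measure E}
    [IsFiniteMeasure ν] [IsProbabilityMeasure ω] (hν : IsRotationInvariant ν)
    (hω : IsRotationInvariant ω) (hω_sphere : ∀ᵐ θ ∂ω, ‖θ‖ = 1) :
    ν = (ω.prod (ν.map norm)).map fun p => p.2 • p.1 := by
  refine Measure.ext_of_charFun (funext fun t => ?_)
  rw [charFun_map_smul_prod, integral_map (by fun_prop) (by fun_prop)]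
  calc charFun ν t = ∫ _, charFun ν t ∂ω := by simp
    _ = ∫ θ, charFun ν (‖t‖ • θ) ∂ω := integral_congr_ae (hω_sphere.mono fun θ hθ =>
        hν.charFun_eq_of_norm_eq (by rw [norm_smul, hθ, norm_norm, mul_one]))
    _ = ∫ x, charFun ω (‖t‖ • x) ∂ν := (integral_charFun_smul_comm ω ν _).symm
    _ = ∫ x, charFun ω (‖x‖ • t) ∂ν :=
        integral_congr_ae (ae_of_all _ fun x => hω.charFun_eq_of_norm_eq (by
          simp only [norm_smul, norm_norm, mul_comm]))

end ScaleMixture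

lemma mconvE_rescaleE (n : ℕ) (μ ν : Measure (EuclideanSpace ℝ (Fin n))) [SFinite μ] [SFinite ν]
    (a b : ℝ) :
    mconvE n (rescaleE n a μ) (rescaleE n b ν) = (μ.prod ν).map fun p => a • p.1 + b • p.2 := by
  rw [mconvE, rescaleE, rescaleE, Measure.map_prod_map _ _ (by fun_prop) (by fun_prop),
    Measure.map_map (by fun_prop) (by fun_prop)]
  rfl

theorem stmt19_general (n : ℕ)
    (ω : Measure (EuclideanSpace ℝ (Fin n))) (hω : IsProbabilityMeasure ω)
    (hsphere : ω (Metric.sphere (0 : EuclideanSpace ℝ (Fin n)) 1) = 1)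
    (hrot : ∀ f : EuclideanSpace ℝ (Fin n) ≃ₗᵢ[ℝ] EuclideanSpace ℝ (Fin n),
      ω.map ⇑f = ω) :
    ∀ a b : ℝ,
      (∃ lam : Measure ℝ, IsProbabilityMeasure lam ∧ lam (Set.Iio 0) = 0 ∧
        mconvE n (rescaleE n a ω) (rescaleE n b ω) = mixE n ω lam) ∧
      mconvE n (rescaleE n a ω) (rescaleE n b ω)
        = mixE n ω ((ω.prod ω).map (fun p => ‖a • p.1 + b • p.2‖)) := by
  intro a b
  have hω_sphere : ∀ᵐ θ ∂ω, ‖θ‖ = 1 := by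
    filter_upwards [(mem_ae_iff_prob_eq_one Metric.isClosed_sphere.measurableSet).2 hsphere]
      with θ hθ using mem_sphere_zero_iff_norm.1 hθ
  have hmix : mconvE n (rescaleE n a ω) (rescaleE n b ω)
      = mixE n ω ((ω.prod ω).map (fun p => ‖a • p.1 + b • p.2‖)) := by
    rw [mconvE_rescaleE, ← Function.comp_def norm, ← Measure.map_map (by fun_prop) (by fun_prop)]
    exact IsRotationInvariant.eq_map_smul_prod_map_norm
      (IsRotationInvariant.map_smul_add_smul hrot hrot a b) hrot hω_sphere
  refine ⟨⟨_, Measure.isProbabilityMeasure_map (by fun_prop), ?_, hmix⟩, hmix⟩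
  rw [Measure.map_apply (by fun_prop) measurableSet_Iio]
  simp [Set.preimage, (norm_nonneg _).not_gt]

theorem stmt19 (n : ℕ) (hn : 2 ≤ n)
    (ω : Measure (EuclideanSpace ℝ (Fin n))) (hω : IsProbabilityMeasure ω)
    (hsphere : ω (Metric.sphere (0 : EuclideanSpace ℝ (Fin n)) 1) = 1)
    (hrot : ∀ f : EuclideanSpace ℝ (Fin n) ≃ₗᵢ[ℝ] EuclideanSpace ℝ (Fin n),
      ω.map ⇑f = ω) :
    ∀ a b : ℝ,
      (∃ lam : Measure ℝ, IsProbabilityMeasure lam ∧ lam (Set.Iio 0) = 0 ∧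
        mconvE n (rescaleE n a ω) (rescaleE n b ω) = mixE n ω lam) ∧
      mconvE n (rescaleE n a ω) (rescaleE n b ω)
        = mixE n ω ((ω.prod ω).map (fun p => ‖a • p.1 + b • p.2‖)) :=
  stmt19_general n ω hω hsphere hrot
end
end
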